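/- Let (X,d) be a complete extended metric space and S a set of pairs (x,x') of distinct points of X with d(x,x') < ∞ which contains every finite-distance pair of distinct points that is not joined by a metric segment in X. Form the S-convex completion of X: to the disjoint union of X and one copy of the real interval [0, d(x,x')] for each pair (x,x') ∈ S, apply the gluing pseudodistance construction which identifies, for each pair, the endpoint 0 of its interval with x and the endpoint d(x,x') with x', and take the metric quotient. Then the S-convex completion is a complete, convex extended metric space. In particular, taking S to be the set of all finite-distance pairs of distinct points, the convex completion of any complete extended metric space is complete and convex. -/

import Mathlib

open ENNReal NNReal

variable {X : Type*} [EMetricSpace X]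

/-- The underlying set of the `S`-convex completion before the metric identification: the
disjoint union of `X` and, for each pair `p ∈ S`, a copy of the real interval
`[0, d(p.1, p.2)]`. -/
abbrev SGlueSpace (S : Set (X × X)) : Type _ :=
  X ⊕ ((p : S) × (Set.Icc (0 : ℝ) (edist (p : X × X).1 (p : X × X).2).toReal))

open Classical in
/-- The base extended distance on the disjoint union: the original distances within each
summand and within each attached interval, and `∞` across distinct summands. -/
noncomputable def sglueBase (S : Set (X × X)) : SGlueSpace S → SGlueSpace S → ℝ≥0∞
  | Sum.inl x, Sum.inl x' => edist x x'
  | Sum.inr ⟨p, t⟩, Sum.inr ⟨p', t'⟩ =>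
      if p = p' then edist (t : ℝ) (t' : ℝ) else ⊤
  | _, _ => ⊤

/-- The gluing identifications: for each pair `p = (x, x') ∈ S`, the endpoint `0` of the
attached interval is identified with `x` and the endpoint `d(x, x')` with `x'`. -/
def sglueRel (S : Set (X × X)) : SGlueSpace S → SGlueSpace S → Prop := fun a b =>
  ∃ p : S,
    (a = Sum.inl (p : X × X).1 ∧
      b = Sum.inr ⟨p, ⟨0, Set.left_mem_Icc.mpr ENNReal.toReal_nonneg⟩⟩) ∨
    (a = Sum.inl (p : X × X).2 ∧
      b = Sum.inr ⟨p, ⟨(edist (p : X × X).1 (p : X × X).2).toReal,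
        Set.right_mem_Icc.mpr ENNReal.toReal_nonneg⟩⟩)

/-- The gluing pseudodistance of the `S`-convex completion: the infimum of chain sums, the
chains passing between summands only through the gluing identifications (or their
consequences under the generated equivalence relation). -/
noncomputable def sglueDist (S : Set (X × X)) (a b : SGlueSpace S) : ℝ≥0∞ :=
  sInf {L : ℝ≥0∞ | ∃ (n : ℕ) (p q : Fin (n + 1) → SGlueSpace S),
    p 0 = a ∧ q (Fin.last n) = b ∧
    (∀ s : Fin n, Relation.EqvGen (sglueRel S) (q s.castSucc) (p s.succ)) ∧
    L = ∑ s, sglueBase S (p s) (q s)}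

/-- A metric segment in `X` joining `x` and `x'` (with `d(x, x') < ∞`): an isometric map
`[0, d(x, x')] → X` with the prescribed endpoints. -/
def JoinedBySegment (x x' : X) : Prop :=
  ∃ φ : ℝ → X,
    (∀ s ∈ Set.Icc (0 : ℝ) (edist x x').toReal,
      ∀ t ∈ Set.Icc (0 : ℝ) (edist x x').toReal, edist (φ s) (φ t) = edist s t) ∧
    φ 0 = x ∧ φ (edist x x').toReal = x'

/-!
The gluing pseudodistance is bounded above by chains and below by potentials: functions that are
`1`-Lipschitz for the base distance and agree on glued points. The potential `d(x, ·)`, continued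
into each interval through its endpoints, shows that `X` embeds isometrically; the potential
"distance along the interval, or to an endpoint and on from there" shows that every interval embeds
isometrically and that leaving an interval costs the distance to one of its endpoints.

Convexity: if `a` is interior to an interval, its distance to `b` is realised by moving along the
interval (to `b` itself or to an endpoint), and the midpoint of that stretch lies between. Otherwise
both points may be taken in `X`, where they are joined by a metric segment or, by the hypothesis on
`S`, by an attached interval.

Completeness: a Cauchy sequence that comes arbitrarily close to `X` converges to the limit of
nearby points of the complete space `X`; otherwise it eventually stays away from `X`, hence inside
one interval, which is complete as well.
-/

open Set Filter Topology

section Betweenness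

variable {α : Type*} [PseudoEMetricSpace α]

def MetricBetween (a c b : α) : Prop :=
  edist a c ≠ 0 ∧ edist c b ≠ 0 ∧ edist a b = edist a c + edist c b

variable (α) in
def IsMengerConvex : Prop :=
  ∀ a b : α, edist a b ≠ 0 → edist a b ≠ ⊤ → ∃ c, MetricBetween a c b

theorem MetricBetween.symm {a b c : α} (h : MetricBetween a c b) : MetricBetween b c a := by
  obtain ⟨hac, hcb, habc⟩ := h
  refine ⟨by rwa [edist_comm], by rwa [edist_comm], ?_⟩
  rw [edist_comm, habc, add_comm, edist_comm a, edist_comm c]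

theorem MetricBetween.congr {a a' b b' c : α} (ha : edist a a' = 0) (hb : edist b b' = 0)
    (h : MetricBetween a' c b') : MetricBetween a c b := by
  rwa [MetricBetween, edist_congr_right ha, edist_congr_left hb, edist_congr_right ha,
    edist_congr_left hb]

theorem metricBetween_of_le {a b c : α} {r w : ℝ≥0∞} (hr : r ≠ 0) (hab : edist a b ≠ ⊤)
    (hac : edist a c ≤ r) (hcb : edist c b ≤ r + w) (h : r + (r + w) ≤ edist a b) :
    MetricBetween a c b := by
  have hrw : r + w ≠ ⊤ := ne_top_of_le_ne_top hab (le_add_self.trans h)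
  have hr' : r ≠ ⊤ := ne_top_of_le_ne_top hrw le_self_add
  have heq : edist a b = edist a c + edist c b :=
    le_antisymm (edist_triangle a c b) ((add_le_add hac hcb).trans h)
  refine ⟨fun h0 => ?_, fun h0 => ?_, heq⟩
  · rw [h0, zero_add] at heq
    exact ((ENNReal.lt_add_right hrw hr).trans_eq (add_comm _ _)).not_ge
      (h.trans (heq.le.trans hcb))
  · rw [h0, add_zero] at heq
    exact (ENNReal.lt_add_right hr' fun h => hr (add_eq_zero.1 h).1).not_ge
      (h.trans (heq.le.trans hac))

theorem Real.edist_left_avg (t s : ℝ) : edist t ((t + s) / 2) = edist t s / 2 := by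
  rw [edist_dist, edist_dist, Real.dist_eq, Real.dist_eq,
    show t - (t + s) / 2 = (t - s) / 2 by ring, abs_div, abs_two,
    ENNReal.ofReal_div_of_pos two_pos, ENNReal.ofReal_ofNat]

theorem Real.edist_avg_right (t s : ℝ) : edist ((t + s) / 2) s = edist t s / 2 := by
  rw [edist_dist, edist_dist, Real.dist_eq, Real.dist_eq,
    show (t + s) / 2 - s = (t - s) / 2 by ring, abs_div, abs_two,
    ENNReal.ofReal_div_of_pos two_pos, ENNReal.ofReal_ofNat]

theorem ENNReal.ofReal_le_ofReal_add_edist (a b : ℝ) :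
    ENNReal.ofReal a ≤ ENNReal.ofReal b + edist a b := by
  rw [edist_dist, Real.dist_eq]
  exact (ENNReal.ofReal_le_ofReal (by linarith [le_abs_self (a - b)])).trans ENNReal.ofReal_add_le

theorem exists_metricBetween_of_isometricOn {γ : ℝ → α} {t s : ℝ} (hts : t ≠ s)
    (hγ : ∀ u ∈ uIcc t s, ∀ v ∈ uIcc t s, edist (γ u) (γ v) = edist u v) {b : α}
    (hb : edist (γ t) b ≠ ⊤) (h : edist t s + edist (γ s) b ≤ edist (γ t) b) :
    ∃ c, MetricBetween (γ t) c b := by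
  have hm : (t + s) / 2 ∈ uIcc t s :=
    mem_uIcc.2 (by rcases le_total t s with h | h <;> [left; right] <;> constructor <;> linarith)
  refine ⟨γ ((t + s) / 2),
    metricBetween_of_le (r := edist t s / 2) (w := edist (γ s) b) ?_ hb ?_ ?_ ?_⟩
  · exact ENNReal.div_ne_zero.2 ⟨(edist_pos.2 hts).ne', ENNReal.ofNat_ne_top⟩
  · rw [hγ _ left_mem_uIcc _ hm, Real.edist_left_avg]
  · calc edist (γ ((t + s) / 2)) b ≤ edist (γ ((t + s) / 2)) (γ s) + edist (γ s) b :=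
          edist_triangle _ _ _
      _ = edist t s / 2 + edist (γ s) b := by rw [hγ _ hm _ right_mem_uIcc, Real.edist_avg_right]
  · rwa [← add_assoc, ENNReal.add_halves]

end Betweenness

section Completeness

variable {α : Type*} [PseudoEMetricSpace α]

theorem CauchySeq.eventually_near {β : Type*} {u : ℕ → α} (hu : CauchySeq u) {f : β → α}
    (h : ∀ ε > 0, ∃ᶠ n in atTop, ∃ y, edist (u n) (f y) < ε) :
    ∀ ε > 0, ∃ y, ∀ᶠ n in atTop, edist (u n) (f y) < ε := by
  intro ε hε
  obtain ⟨N, hN⟩ := EMetric.cauchySeq_iff.1 hu (ε / 2) (ENNReal.half_pos hε.ne')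
  obtain ⟨n, hn, y, hy⟩ := (h (ε / 2) (ENNReal.half_pos hε.ne')).forall_exists_of_atTop N
  refine ⟨y, eventually_atTop.2 ⟨N, fun m hm => ?_⟩⟩
  calc edist (u m) (f y) ≤ edist (u m) (u n) + edist (u n) (f y) := edist_triangle _ _ _
    _ < ε / 2 + ε / 2 := ENNReal.add_lt_add (hN m hm n hn) hy
    _ = ε := ENNReal.add_halves ε

theorem exists_tendsto_of_eventually_near {β : Type*} [PseudoEMetricSpace β] [CompleteSpace β]
    {f : β → α} (hf : Isometry f) {u : ℕ → α}
    (h : ∀ ε > 0, ∃ y, ∀ᶠ n in atTop, edist (u n) (f y) < ε) :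
    ∃ z, Tendsto u atTop (𝓝 (f z)) := by
  choose y hy using fun k : ℕ => h (2⁻¹ ^ k) (ENNReal.pow_pos (by simp) k)
  have hstep : ∀ k, edist (y k) (y (k + 1)) ≤ 2 / 2 ^ k := by
    intro k
    obtain ⟨n, hn, hn'⟩ := ((hy k).and (hy (k + 1))).exists
    rw [← hf.edist_eq]
    calc edist (f (y k)) (f (y (k + 1)))
        ≤ edist (u n) (f (y k)) + edist (u n) (f (y (k + 1))) := edist_triangle_left _ _ _
      _ ≤ 2⁻¹ ^ k + 2⁻¹ ^ k := add_le_add hn.le (hn'.le.trans (pow_le_pow_of_le_one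
          zero_le (ENNReal.inv_le_one.2 one_le_two) k.le_succ))
      _ = 2 / 2 ^ k := by rw [← two_mul, ← ENNReal.inv_pow, div_eq_mul_inv]
  obtain ⟨z, hz⟩ := cauchySeq_tendsto_of_complete
    (cauchySeq_of_edist_le_geometric_two 2 ENNReal.ofNat_ne_top hstep)
  refine ⟨z, tendsto_iff_edist_tendsto_0.2 (ENNReal.tendsto_nhds_zero.2 fun ε hε => ?_)⟩
  have hε2 : 0 < ε / 2 := ENNReal.half_pos hε.ne'
  obtain ⟨k, hk, hkz⟩ := ((ENNReal.tendsto_pow_atTop_nhds_zero_of_lt_one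
    (ENNReal.inv_lt_one.2 one_lt_two)).eventually (gt_mem_nhds hε2) |>.and
    ((tendsto_iff_edist_tendsto_0.1 hz).eventually (gt_mem_nhds hε2))).exists
  filter_upwards [hy k] with n hn
  calc edist (u n) (f z) ≤ edist (u n) (f (y k)) + edist (f (y k)) (f z) := edist_triangle _ _ _
    _ ≤ ε / 2 + ε / 2 := add_le_add (hn.trans hk).le (by rw [hf.edist_eq]; exact hkz.le)
    _ = ε := ENNReal.add_halves ε

end Completeness

section GluingPseudodistance

variable {S : Set (X × X)}

theorem sglueBase_self (a : SGlueSpace S) : sglueBase S a a = 0 := by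
  rcases a with x | ⟨p, t⟩ <;> simp [sglueBase]

theorem sglueBase_comm (a b : SGlueSpace S) : sglueBase S a b = sglueBase S b a := by
  rcases a with x | ⟨p, t⟩ <;> rcases b with y | ⟨q, s⟩
  · simp [sglueBase, edist_comm]
  · simp [sglueBase]
  · simp [sglueBase]
  · by_cases hpq : p = q
    · subst hpq; simp [sglueBase, edist_comm]
    · simp [sglueBase, hpq, Ne.symm hpq]

theorem sglueDist_le_sglueBase (a b : SGlueSpace S) : sglueDist S a b ≤ sglueBase S a b :=
  sInf_le ⟨0, fun _ => a, fun _ => b, rfl, rfl, fun s => s.elim0, by simp⟩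

theorem sglueDist_le_add_sglueBase {a b y z : SGlueSpace S}
    (h : Relation.EqvGen (sglueRel S) b y) :
    sglueDist S a z ≤ sglueDist S a b + sglueBase S y z := by
  rw [sglueDist, sglueDist, ENNReal.sInf_add]
  refine le_iInf₂ fun L ⟨n, p, q, hp, hq, hlink, hL⟩ =>
    sInf_le ⟨n + 1, Fin.snoc p y, Fin.snoc q z, ?_, Fin.snoc_last _ _, fun s => ?_, ?_⟩
  · rwa [show (0 : Fin (n + 2)) = (0 : Fin (n + 1)).castSucc from rfl, Fin.snoc_castSucc]
  · induction s using Fin.lastCases with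
    | last => rwa [Fin.snoc_castSucc, Fin.succ_last, Fin.snoc_last, hq]
    | cast i => rw [Fin.snoc_castSucc, Fin.succ_castSucc, Fin.snoc_castSucc]; exact hlink i
  · simp [Fin.sum_univ_castSucc, hL]

theorem sglueDist_comm (a b : SGlueSpace S) : sglueDist S a b = sglueDist S b a := by
  suffices h : ∀ a b : SGlueSpace S, sglueDist S b a ≤ sglueDist S a b from
    le_antisymm (h b a) (h a b)
  refine fun a b => le_sInf fun L ⟨n, p, q, hp, hq, hlink, hL⟩ =>
    sInf_le ⟨n, fun s => q s.rev, fun s => p s.rev, by simpa using hq, by simpa using hp,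
      fun s => ?_, ?_⟩
  · simpa [Fin.rev_castSucc, Fin.rev_succ] using (hlink s.rev).symm
  · rw [hL]
    exact Fintype.sum_bijective Fin.rev Fin.rev_involutive.bijective _ _ fun s => by
      simp [sglueBase_comm]

def IsGluePotential (F : SGlueSpace S → ℝ≥0∞) : Prop :=
  (∀ a b, F b ≤ F a + sglueBase S a b) ∧ ∀ a b, sglueRel S a b → F a = F b

theorem IsGluePotential.eq_of_eqvGen {F : SGlueSpace S → ℝ≥0∞} (hF : IsGluePotential F)
    {a b : SGlueSpace S} (h : Relation.EqvGen (sglueRel S) a b) : F a = F b := by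
  induction h with
  | rel a b h => exact hF.2 a b h
  | refl => rfl
  | symm _ _ _ ih => exact ih.symm
  | trans _ _ _ _ _ ih ih' => exact ih.trans ih'

theorem IsGluePotential.le_add_sum {F : SGlueSpace S → ℝ≥0∞} (hF : IsGluePotential F)
    {n : ℕ} (p q : Fin (n + 1) → SGlueSpace S)
    (hlink : ∀ s : Fin n, Relation.EqvGen (sglueRel S) (q s.castSucc) (p s.succ)) :
    F (q (Fin.last n)) ≤ F (p 0) + ∑ s, sglueBase S (p s) (q s) := by
  induction n with
  | zero => simpa using hF.1 (p 0) (q 0)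
  | succ n ih =>
    have hprev := ih (fun s => p s.castSucc) (fun s => q s.castSucc) fun s => by
      simpa only [Fin.succ_castSucc] using hlink s.castSucc
    have hjump : F (q (Fin.last n).castSucc) = F (p (Fin.last (n + 1))) := by
      rw [← Fin.succ_last]; exact hF.eq_of_eqvGen (hlink (Fin.last n))
    calc F (q (Fin.last (n + 1)))
        ≤ F (p (Fin.last (n + 1))) + sglueBase S (p (Fin.last (n + 1))) (q (Fin.last (n + 1))) :=
          hF.1 _ _
      _ ≤ F (p 0) + ∑ s : Fin (n + 1), sglueBase S (p s.castSucc) (q s.castSucc)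
            + sglueBase S (p (Fin.last (n + 1))) (q (Fin.last (n + 1))) := by
          rw [← hjump]; exact add_le_add_left (by simpa only [Fin.castSucc_zero] using hprev) _
      _ = F (p 0) + ∑ s, sglueBase S (p s) (q s) := by
          rw [Fin.sum_univ_castSucc (f := fun s => sglueBase S (p s) (q s)), add_assoc]

theorem IsGluePotential.le_add_sglueDist {F : SGlueSpace S → ℝ≥0∞} (hF : IsGluePotential F)
    (a b : SGlueSpace S) : F b ≤ F a + sglueDist S a b := by
  rw [sglueDist, add_comm, ENNReal.sInf_add]
  refine le_iInf₂ fun L ⟨n, p, q, hp, hq, hlink, hL⟩ => ?_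
  rw [hL, add_comm, ← hp, ← hq]
  exact hF.le_add_sum p q hlink

theorem isGluePotential_sglueDist (a : SGlueSpace S) : IsGluePotential (sglueDist S a) := by
  refine ⟨fun b c => sglueDist_le_add_sglueBase (Relation.EqvGen.refl b), fun b c h => ?_⟩
  have h₁ := sglueDist_le_add_sglueBase (a := a) (z := c) (Relation.EqvGen.rel b c h)
  have h₂ := sglueDist_le_add_sglueBase (a := a) (z := b) ((Relation.EqvGen.rel b c h).symm)
  rw [sglueBase_self, add_zero] at h₁ h₂
  exact le_antisymm h₂ h₁

theorem sglueDist_triangle (a b c : SGlueSpace S) :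
    sglueDist S a c ≤ sglueDist S a b + sglueDist S b c :=
  (isGluePotential_sglueDist a).le_add_sglueDist b c

theorem sglueDist_self (a : SGlueSpace S) : sglueDist S a a = 0 :=
  le_antisymm ((sglueDist_le_sglueBase a a).trans_eq (sglueBase_self a)) zero_le

end GluingPseudodistance

/-- Carries the gluing pseudodistance as `edist`; the `S`-convex completion is its metric
quotient. -/
def SGlue (S : Set (X × X)) : Type _ := SGlueSpace S

noncomputable instance {S : Set (X × X)} : PseudoEMetricSpace (SGlue S) where
  edist := sglueDist S
  edist_self := sglueDist_self
  edist_comm := sglueDist_comm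
  edist_triangle := sglueDist_triangle

namespace SGlue

variable {S : Set (X × X)}

abbrev len (p : S) : ℝ := (edist (p : X × X).1 (p : X × X).2).toReal

def ofX (x : X) : SGlue S := Sum.inl x

/-- The interval attached along `p`, extended constantly outside `[0, len p]`. -/
noncomputable def curve (p : S) (u : ℝ) : SGlue S :=
  Sum.inr ⟨p, projIcc 0 (len p) ENNReal.toReal_nonneg u⟩

theorem curve_of_mem (p : S) {u : ℝ} (hu : u ∈ Icc 0 (len p)) :
    curve p u = Sum.inr ⟨p, ⟨u, hu⟩⟩ := by
  rw [curve, projIcc_of_mem _ hu]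

theorem ofX_or_curve (a : SGlue S) :
    (∃ x, a = ofX x) ∨ ∃ p : S, ∃ t ∈ Icc 0 (len p), a = curve p t := by
  rcases a with x | ⟨p, t⟩
  · exact .inl ⟨x, rfl⟩
  · exact .inr ⟨p, t, t.2, (curve_of_mem p t.2).symm⟩

theorem edist_le_sglueBase (a b : SGlue S) : edist a b ≤ sglueBase S a b :=
  sglueDist_le_sglueBase a b

theorem edist_eq_zero_of_sglueRel {a b : SGlue S} (h : sglueRel S a b) : edist a b = 0 :=
  le_antisymm ((isGluePotential_sglueDist a).eq_of_eqvGen (.rel a b h) ▸ sglueDist_self a).le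
    zero_le

theorem edist_ofX_curve_zero (p : S) : edist (ofX (p : X × X).1) (curve p 0) = 0 := by
  rw [curve, projIcc_left]
  exact edist_eq_zero_of_sglueRel ⟨p, .inl ⟨rfl, rfl⟩⟩

theorem edist_ofX_curve_len (p : S) : edist (ofX (p : X × X).2) (curve p (len p)) = 0 := by
  rw [curve, projIcc_right]
  exact edist_eq_zero_of_sglueRel ⟨p, .inr ⟨rfl, rfl⟩⟩

theorem edist_curve_le (p : S) {u v : ℝ} (hu : u ∈ Icc 0 (len p)) (hv : v ∈ Icc 0 (len p)) :
    edist (curve p u) (curve p v) ≤ edist u v := by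
  rw [curve_of_mem p hu, curve_of_mem p hv]
  exact (edist_le_sglueBase _ _).trans_eq (by simp [sglueBase])

theorem le_add_sglueBase_of_summands {F : SGlueSpace S → ℝ≥0∞}
    (hX : ∀ x y : X, F (.inl y) ≤ F (.inl x) + edist x y)
    (hI : ∀ (p : S) (t s : Icc 0 (len p)),
      F (.inr ⟨p, s⟩) ≤ F (.inr ⟨p, t⟩) + edist (t : ℝ) s) :
    ∀ a b, F b ≤ F a + sglueBase S a b := by
  rintro (x | ⟨p, t⟩) (y | ⟨q, s⟩)
  · exact hX x y
  · simp [sglueBase]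
  · simp [sglueBase]
  · by_cases hpq : p = q
    · subst hpq; simpa [sglueBase] using hI p t s
    · simp [sglueBase, hpq]

noncomputable def pointPotential (x : X) : SGlueSpace S → ℝ≥0∞
  | .inl z => edist x z
  | .inr ⟨p, t⟩ => min (edist x (p : X × X).1 + ENNReal.ofReal t)
      (edist x (p : X × X).2 + ENNReal.ofReal (len p - t))

theorem isGluePotential_pointPotential (hS : ∀ p ∈ S, edist p.1 p.2 ≠ ⊤) (x : X) :
    IsGluePotential (pointPotential (S := S) x) := by
  refine ⟨le_add_sglueBase_of_summands (fun y z => edist_triangle _ _ _) fun p t s => ?_, ?_⟩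
  · refine (min_le_min ?_ ?_).trans_eq (min_add_add_right _ _ _)
    · rw [add_assoc]
      exact add_le_add le_rfl ((ofReal_le_ofReal_add_edist _ _).trans_eq (by rw [edist_comm]))
    · rw [add_assoc, ← edist_sub_left (len p)]
      exact add_le_add le_rfl ((ofReal_le_ofReal_add_edist _ _).trans_eq (by rw [edist_comm]))
  · rintro a b ⟨q, ⟨rfl, rfl⟩ | ⟨rfl, rfl⟩⟩
    · show edist x (q : X × X).1 = min (edist x (q : X × X).1 + ENNReal.ofReal 0)
        (edist x (q : X × X).2 + ENNReal.ofReal (len q - 0))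
      rw [ENNReal.ofReal_zero, add_zero, sub_zero, ENNReal.ofReal_toReal (hS q q.2)]
      exact (min_eq_left (edist_triangle_right _ _ _)).symm
    · show edist x (q : X × X).2 = min (edist x (q : X × X).1 + ENNReal.ofReal (len q))
        (edist x (q : X × X).2 + ENNReal.ofReal (len q - len q))
      rw [sub_self, ENNReal.ofReal_zero, add_zero, ENNReal.ofReal_toReal (hS q q.2)]
      exact (min_eq_right (edist_triangle _ _ _)).symm

theorem pointPotential_le_edist (hS : ∀ p ∈ S, edist p.1 p.2 ≠ ⊤) (x : X) (b : SGlue S) :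
    pointPotential x b ≤ edist (ofX x) b := by
  have h := (isGluePotential_pointPotential hS x).le_add_sglueDist (.inl x) b
  rwa [show pointPotential (S := S) x (.inl x) = 0 from edist_self x, zero_add] at h

theorem isometry_ofX (hS : ∀ p ∈ S, edist p.1 p.2 ≠ ⊤) : Isometry (ofX : X → SGlue S) :=
  fun x y => le_antisymm (edist_le_sglueBase _ _) (pointPotential_le_edist hS x (ofX y))

open Classical in
noncomputable def intervalGap (p : S) (t : ℝ) : SGlueSpace S → ℝ≥0∞
  | .inl _ => ⊤
  | .inr ⟨q, s⟩ => if q = p then edist (s : ℝ) t else ⊤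

noncomputable def intervalPotential (p : S) (t : ℝ) (b : SGlueSpace S) : ℝ≥0∞ :=
  min (min (ENNReal.ofReal t + edist (ofX (p : X × X).1) b)
    (ENNReal.ofReal (len p - t) + edist (ofX (p : X × X).2) b)) (intervalGap p t b)

theorem intervalGap_eq_top {p : S} {t : ℝ} {b : SGlue S}
    (hb : ∀ s ∈ Icc 0 (len p), b ≠ curve p s) : intervalGap p t b = ⊤ := by
  rcases b with x | ⟨q, s⟩
  · rfl
  · by_cases hq : q = p
    · subst hq; exact absurd (curve_of_mem q s.2).symm (hb s s.2)
    · simp [intervalGap, hq]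

theorem intervalGap_le_add_sglueBase (p : S) (t : ℝ) (a b : SGlueSpace S) :
    intervalGap p t b ≤ intervalGap p t a + sglueBase S a b := by
  refine le_add_sglueBase_of_summands (by simp [intervalGap]) (fun q s s' => ?_) a b
  by_cases hq : q = p
  · simpa [intervalGap, hq, add_comm] using edist_triangle_left (s' : ℝ) t s
  · simp [intervalGap, hq]

theorem isGluePotential_intervalPotential (p : S) {t : ℝ} (ht : t ∈ Icc 0 (len p)) :
    IsGluePotential (intervalPotential p t) := by
  have hA := isGluePotential_sglueDist (S := S) (.inl (p : X × X).1)
  have hB := isGluePotential_sglueDist (S := S) (.inl (p : X × X).2)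
  refine ⟨fun a b => ?_, fun a b hab => ?_⟩
  · calc intervalPotential p t b
        ≤ min (min (ENNReal.ofReal t + edist (ofX (p : X × X).1) a + sglueBase S a b)
            (ENNReal.ofReal (len p - t) + edist (ofX (p : X × X).2) a + sglueBase S a b))
            (intervalGap p t a + sglueBase S a b) := by
          refine min_le_min (min_le_min ?_ ?_) (intervalGap_le_add_sglueBase p t a b) <;>
            rw [add_assoc]
          exacts [add_le_add le_rfl (hA.1 a b), add_le_add le_rfl (hB.1 a b)]
      _ = intervalPotential p t a + sglueBase S a b := by
          simp only [intervalPotential, min_add_add_right]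
  have hA' : edist (ofX (p : X × X).1) a = edist (ofX (p : X × X).1) b :=
    edist_congr_left (edist_eq_zero_of_sglueRel hab)
  have hB' : edist (ofX (p : X × X).2) a = edist (ofX (p : X × X).2) b :=
    edist_congr_left (edist_eq_zero_of_sglueRel hab)
  suffices hG : intervalGap p t a = ⊤ ∧ min (ENNReal.ofReal t + edist (ofX (p : X × X).1) b)
      (ENNReal.ofReal (len p - t) + edist (ofX (p : X × X).2) b) ≤ intervalGap p t b by
    simp only [intervalPotential, hA', hB', hG.1, min_top_right, min_eq_left hG.2]
  -- at a glued endpoint of the interval along `p`, the gap is the cost of exiting there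
  obtain ⟨q, ⟨rfl, rfl⟩ | ⟨rfl, rfl⟩⟩ := hab <;> refine ⟨rfl, ?_⟩ <;>
    by_cases hq : q = p <;> simp only [intervalGap, hq, if_true, if_false, le_top] <;> subst hq
  · refine (min_le_left _ _).trans_eq ?_
    rw [show edist (ofX (q : X × X).1) _ = 0 from
        edist_eq_zero_of_sglueRel ⟨q, .inl ⟨rfl, rfl⟩⟩, add_zero, edist_dist, Real.dist_eq,
      zero_sub, abs_neg, abs_of_nonneg ht.1]
  · refine (min_le_right _ _).trans_eq ?_
    rw [show edist (ofX (q : X × X).2) _ = 0 from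
        edist_eq_zero_of_sglueRel ⟨q, .inr ⟨rfl, rfl⟩⟩, add_zero, edist_dist, Real.dist_eq,
      abs_of_nonneg (sub_nonneg.2 ht.2)]

theorem intervalPotential_le_edist (p : S) {t : ℝ} (ht : t ∈ Icc 0 (len p)) (b : SGlue S) :
    intervalPotential p t b ≤ edist (curve p t) b := by
  have h := (isGluePotential_intervalPotential p ht).le_add_sglueDist (curve p t) b
  have h0 : intervalPotential p t (curve p t) = 0 :=
    nonpos_iff_eq_zero.1 ((min_le_right _ _).trans_eq (by simp [curve_of_mem p ht, intervalGap]))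
  rwa [h0, zero_add] at h

theorem edist_ofX_fst_curve (hS : ∀ p ∈ S, edist p.1 p.2 ≠ ⊤) (p : S) {t : ℝ}
    (ht : t ∈ Icc 0 (len p)) : edist (ofX (p : X × X).1) (curve p t) = ENNReal.ofReal t := by
  refine le_antisymm ?_ ((le_trans ?_ (pointPotential_le_edist hS _ (curve p t))))
  · rw [edist_congr_right (edist_ofX_curve_zero p)]
    refine (edist_curve_le p (left_mem_Icc.2 toReal_nonneg) ht).trans_eq ?_
    rw [edist_dist, Real.dist_eq, zero_sub, abs_neg, abs_of_nonneg ht.1]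
  · rw [curve_of_mem p ht]
    show ENNReal.ofReal t ≤ min (edist (p : X × X).1 (p : X × X).1 + ENNReal.ofReal t)
      (edist (p : X × X).1 (p : X × X).2 + ENNReal.ofReal (len p - t))
    rw [edist_self, zero_add, ← ENNReal.ofReal_toReal (hS p p.2),
      ← ENNReal.ofReal_add toReal_nonneg (sub_nonneg.2 ht.2)]
    exact le_min le_rfl (ENNReal.ofReal_le_ofReal (by linarith [ht.2]))

theorem edist_ofX_snd_curve (hS : ∀ p ∈ S, edist p.1 p.2 ≠ ⊤) (p : S) {t : ℝ}
    (ht : t ∈ Icc 0 (len p)) :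
    edist (ofX (p : X × X).2) (curve p t) = ENNReal.ofReal (len p - t) := by
  refine le_antisymm ?_ ((le_trans ?_ (pointPotential_le_edist hS _ (curve p t))))
  · rw [edist_congr_right (edist_ofX_curve_len p)]
    refine (edist_curve_le p (right_mem_Icc.2 toReal_nonneg) ht).trans_eq ?_
    rw [edist_dist, Real.dist_eq, abs_of_nonneg (sub_nonneg.2 ht.2)]
  · rw [curve_of_mem p ht]
    show ENNReal.ofReal (len p - t) ≤ min (edist (p : X × X).2 (p : X × X).1 + ENNReal.ofReal t)
      (edist (p : X × X).2 (p : X × X).2 + ENNReal.ofReal (len p - t))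
    rw [edist_self, zero_add, edist_comm, ← ENNReal.ofReal_toReal (hS p p.2),
      ← ENNReal.ofReal_add toReal_nonneg ht.1]
    exact le_min (ENNReal.ofReal_le_ofReal (by linarith [ht.1])) le_rfl

theorem edist_curve (hS : ∀ p ∈ S, edist p.1 p.2 ≠ ⊤) (p : S) {u v : ℝ}
    (hu : u ∈ Icc 0 (len p)) (hv : v ∈ Icc 0 (len p)) :
    edist (curve p u) (curve p v) = edist u v := by
  refine le_antisymm (edist_curve_le p hu hv) (le_trans ?_ (intervalPotential_le_edist p hu _))
  simp only [intervalPotential, edist_ofX_fst_curve hS p hv, edist_ofX_snd_curve hS p hv]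
  rw [curve_of_mem p hv]
  simp only [intervalGap, if_true]
  rw [edist_comm, edist_dist, Real.dist_eq, ← ENNReal.ofReal_add hu.1 hv.1,
    ← ENNReal.ofReal_add (sub_nonneg.2 hu.2) (sub_nonneg.2 hv.2)]
  refine le_min (le_min (ENNReal.ofReal_le_ofReal ?_) (ENNReal.ofReal_le_ofReal ?_)) le_rfl <;>
    rw [abs_sub_le_iff] <;> constructor <;> linarith [hu.1, hu.2, hv.1, hv.2]

theorem isometry_curve (hS : ∀ p ∈ S, edist p.1 p.2 ≠ ⊤) (p : S) :
    Isometry (fun t : Icc 0 (len p) => curve p t) :=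
  fun s t => edist_curve hS p s.2 t.2

theorem min_via_endpoints_le_edist (p : S) {t : ℝ} (ht : t ∈ Icc 0 (len p)) {b : SGlue S}
    (hb : ∀ s ∈ Icc 0 (len p), b ≠ curve p s) :
    min (ENNReal.ofReal t + edist (ofX (p : X × X).1) b)
      (ENNReal.ofReal (len p - t) + edist (ofX (p : X × X).2) b) ≤ edist (curve p t) b := by
  simpa [intervalPotential, intervalGap_eq_top hb] using intervalPotential_le_edist p ht b

theorem exists_metricBetween_curve (hS : ∀ p ∈ S, edist p.1 p.2 ≠ ⊤) {p : S} {t : ℝ}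
    (ht0 : 0 < t) (htL : t < len p) {b : SGlue S} (h0 : edist (curve p t) b ≠ 0)
    (htop : edist (curve p t) b ≠ ⊤) : ∃ c, MetricBetween (curve p t) c b := by
  have ht : t ∈ Icc 0 (len p) := ⟨ht0.le, htL.le⟩
  have toward : ∀ s ∈ Icc 0 (len p), t ≠ s →
      edist t s + edist (curve p s) b ≤ edist (curve p t) b →
        ∃ c, MetricBetween (curve p t) c b :=
    fun s hs hts h => exists_metricBetween_of_isometricOn hts (fun u hu v hv =>
      edist_curve hS p (uIcc_subset_Icc ht hs hu) (uIcc_subset_Icc ht hs hv)) htop h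
  by_cases hb : ∃ s ∈ Icc 0 (len p), b = curve p s
  · obtain ⟨s, hs, rfl⟩ := hb
    refine toward s hs (fun hts => h0 (by rw [hts, edist_self])) ?_
    rw [edist_self, add_zero, edist_curve hS p ht hs]
  push Not at hb
  rcases min_le_iff.1 (min_via_endpoints_le_edist p ht hb) with h | h
  · refine toward 0 (left_mem_Icc.2 toReal_nonneg) ht0.ne' ?_
    rwa [← edist_congr_right (edist_ofX_curve_zero p), edist_dist, Real.dist_eq, sub_zero,
      abs_of_pos ht0]
  · refine toward (len p) (right_mem_Icc.2 toReal_nonneg) htL.ne ?_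
    rwa [← edist_congr_right (edist_ofX_curve_len p), edist_dist, Real.dist_eq, abs_sub_comm,
      abs_of_pos (sub_pos.2 htL)]

theorem exists_metricBetween_ofX (hS : ∀ p ∈ S, edist p.1 p.2 ≠ ⊤)
    (hSfull : ∀ x x' : X, x ≠ x' → edist x x' ≠ ⊤ → ¬ JoinedBySegment x x' →
      (x, x') ∈ S)
    {x y : X} (h0 : edist x y ≠ 0) (htop : edist x y ≠ ⊤) :
    ∃ c, MetricBetween (ofX x : SGlue S) c (ofX y) := by
  have hL : 0 < (edist x y).toReal := ENNReal.toReal_pos h0 htop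
  obtain ⟨γ, hγ, hγ0, hγL⟩ : ∃ γ : ℝ → SGlue S,
      (∀ u ∈ Icc 0 (edist x y).toReal, ∀ v ∈ Icc 0 (edist x y).toReal,
        edist (γ u) (γ v) = edist u v) ∧
      edist (ofX x) (γ 0) = 0 ∧ edist (ofX y) (γ (edist x y).toReal) = 0 := by
    by_cases hseg : JoinedBySegment x y
    · obtain ⟨φ, hφ, hφ0, hφL⟩ := hseg
      exact ⟨fun u => ofX (φ u), fun u hu v hv => ((isometry_ofX hS).edist_eq _ _).trans
        (hφ u hu v hv), by beta_reduce; rw [hφ0, edist_self],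
        by beta_reduce; rw [hφL, edist_self]⟩
    · have hxy : (x, y) ∈ S := hSfull x y (fun h => h0 (h ▸ edist_self x)) htop hseg
      exact ⟨curve ⟨(x, y), hxy⟩, fun u hu v hv => edist_curve hS _ hu hv,
        edist_ofX_curve_zero ⟨(x, y), hxy⟩, edist_ofX_curve_len ⟨(x, y), hxy⟩⟩
  rw [← uIcc_of_le hL.le] at hγ
  have hγ0L : edist (γ 0) (γ (edist x y).toReal) = edist x y := by
    rw [hγ _ left_mem_uIcc _ right_mem_uIcc, edist_dist, Real.dist_eq, zero_sub, abs_neg,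
      abs_of_pos hL, ENNReal.ofReal_toReal htop]
  obtain ⟨c, hc⟩ := exists_metricBetween_of_isometricOn hL.ne hγ (hγ0L ▸ htop)
    (by rw [edist_self, add_zero, hγ _ left_mem_uIcc _ right_mem_uIcc])
  exact ⟨c, hc.congr hγ0 hγL⟩

theorem edist_ofX_eq_zero_or_eq_curve (a : SGlue S) :
    (∃ x, edist a (ofX x) = 0) ∨ ∃ p : S, ∃ t, 0 < t ∧ t < len p ∧ a = curve p t := by
  rcases ofX_or_curve a with ⟨x, rfl⟩ | ⟨p, t, ht, rfl⟩
  · exact .inl ⟨x, edist_self _⟩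
  rcases ht.1.eq_or_lt with h | h0
  · exact .inl ⟨_, by rw [← h, edist_comm, edist_ofX_curve_zero]⟩
  rcases ht.2.eq_or_lt with h | hL
  · exact .inl ⟨_, by rw [h, edist_comm, edist_ofX_curve_len]⟩
  exact .inr ⟨p, t, h0, hL, rfl⟩

theorem isMengerConvex (hS : ∀ p ∈ S, edist p.1 p.2 ≠ ⊤)
    (hSfull : ∀ x x' : X, x ≠ x' → edist x x' ≠ ⊤ → ¬ JoinedBySegment x x' →
      (x, x') ∈ S) :
    IsMengerConvex (SGlue S) := by
  intro a b h0 htop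
  rcases edist_ofX_eq_zero_or_eq_curve a with ⟨x, hx⟩ | ⟨p, t, ht0, htL, rfl⟩
  · rcases edist_ofX_eq_zero_or_eq_curve b with ⟨y, hy⟩ | ⟨p, t, ht0, htL, rfl⟩
    · have hxy : edist a b = edist x y := by
        rw [edist_congr_right hx, edist_congr_left hy, (isometry_ofX hS).edist_eq]
      obtain ⟨c, hc⟩ := exists_metricBetween_ofX hS hSfull (hxy ▸ h0) (hxy ▸ htop)
      exact ⟨c, hc.congr hx hy⟩
    · obtain ⟨c, hc⟩ := exists_metricBetween_curve hS ht0 htL (by rwa [edist_comm])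
        (by rwa [edist_comm])
      exact ⟨c, hc.symm⟩
  · exact exists_metricBetween_curve hS ht0 htL h0 htop

theorem eventually_eq_curve (hS : ∀ p ∈ S, edist p.1 p.2 ≠ ⊤) {u : ℕ → SGlue S}
    (hu : CauchySeq u) (hfar : ¬ ∀ ε > 0, ∃ᶠ n in atTop, ∃ x, edist (u n) (ofX x) < ε) :
    ∃ p : S, ∀ᶠ n in atTop, ∃ t ∈ Icc 0 (len p), u n = curve p t := by
  push Not at hfar
  obtain ⟨ε, hε, hfar⟩ := hfar
  obtain ⟨N₁, hN₁⟩ := EMetric.cauchySeq_iff.1 hu ε hε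
  obtain ⟨N₂, hN₂⟩ := eventually_atTop.1 hfar
  have hM := hN₂ (max N₁ N₂) (le_max_right _ _)
  rcases ofX_or_curve (u (max N₁ N₂)) with ⟨x, hx⟩ | ⟨p, t, ht, hpt⟩
  · exact absurd ((hM x).trans_eq (by rw [hx, edist_self])) (not_le.2 hε)
  refine ⟨p, eventually_atTop.2 ⟨max N₁ N₂, fun n hn => ?_⟩⟩
  by_contra! hb
  have h₁ := hM (p : X × X).1
  have h₂ := hM (p : X × X).2
  rw [hpt, edist_comm, edist_ofX_fst_curve hS p ht] at h₁
  rw [hpt, edist_comm, edist_ofX_snd_curve hS p ht] at h₂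
  have hlt := hN₁ (max N₁ N₂) (le_max_left _ _) n ((le_max_left _ _).trans hn)
  rw [hpt] at hlt
  exact hlt.not_ge ((le_min (h₁.trans le_self_add) (h₂.trans le_self_add)).trans
    (min_via_endpoints_le_edist p ht hb))

theorem completeSpace [CompleteSpace X] (hS : ∀ p ∈ S, edist p.1 p.2 ≠ ⊤) :
    CompleteSpace (SGlue S) := by
  refine EMetric.complete_of_cauchySeq_tendsto fun u hu => ?_
  by_cases hX : ∀ ε > 0, ∃ᶠ n in atTop, ∃ x, edist (u n) (ofX x) < ε
  · obtain ⟨z, hz⟩ :=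
      exists_tendsto_of_eventually_near (isometry_ofX hS) (hu.eventually_near hX)
    exact ⟨_, hz⟩
  obtain ⟨p, hp⟩ := eventually_eq_curve hS hu hX
  obtain ⟨z, hz⟩ := exists_tendsto_of_eventually_near (isometry_curve hS p)
    (hu.eventually_near fun ε hε => hp.frequently.mono fun n ⟨t, ht, hn⟩ =>
      ⟨⟨t, ht⟩, by rwa [hn, edist_self]⟩)
  exact ⟨_, hz⟩

end SGlue

/-- Let `S` be a set of finite-distance pairs of distinct points of a complete extended
metric space `X`, containing every finite-distance pair of distinct points not joined by a
metric segment.  Then the `S`-convex completion of `X` — the gluing of `X` with one interval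
`[0, d(x, x')]` for each `(x, x') ∈ S`, identified at its endpoints with `x` and `x'` — is
complete and convex (both properties stated on the disjoint union via the gluing
pseudodistance, points of the quotient being points at pseudodistance `0`). -/
theorem sglue_complete_convex [CompleteSpace X] (S : Set (X × X))
    (hS : ∀ p ∈ S, p.1 ≠ p.2 ∧ edist p.1 p.2 ≠ ⊤)
    (hSfull : ∀ x x' : X, x ≠ x' → edist x x' ≠ ⊤ → ¬ JoinedBySegment x x' → (x, x') ∈ S) :
    (∀ u : ℕ → SGlueSpace S,
      (∀ ε : ℝ≥0∞, 0 < ε → ∃ N : ℕ, ∀ m n : ℕ, N ≤ m → N ≤ n →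
        sglueDist S (u m) (u n) < ε) →
      ∃ a : SGlueSpace S,
        Filter.Tendsto (fun n => sglueDist S (u n) a) Filter.atTop (nhds 0)) ∧
    (∀ a b : SGlueSpace S, sglueDist S a b ≠ 0 → sglueDist S a b ≠ ⊤ →
      ∃ c : SGlueSpace S, sglueDist S a c ≠ 0 ∧ sglueDist S c b ≠ 0 ∧
        sglueDist S a b = sglueDist S a c + sglueDist S c b) := by
  have hfin : ∀ p ∈ S, edist p.1 p.2 ≠ ⊤ := fun p hp => (hS p hp).2
  have := SGlue.completeSpace hfin
  refine ⟨fun u hu => ?_, SGlue.isMengerConvex hfin hSfull⟩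
  obtain ⟨a, ha⟩ := cauchySeq_tendsto_of_complete (α := SGlue S) (u := u)
    (EMetric.cauchySeq_iff.2 fun ε hε => (hu ε hε).imp fun N hN m hm n hn => hN m n hm hn)
  exact ⟨a, tendsto_iff_edist_tendsto_0.1 ha⟩
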